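/- arXiv:1002.0982 — 2 statements merged into one kernel-verified Lean document; each statement's English description precedes it below -/
import Mathlib

section
/- Let Q be a quantale and p ∈ Q^{X×Y} a strong coder, i.e., there is an injective map ε : Y → X with p(ε(y), y) = e for all y and p(ε(y₁), y₂) = ⊥ whenever y₁ ≠ y₂. Then H_p ∘ Λ_p = id_{Q^Y}; consequently H_p is surjective and Λ_p is injective. -/
/-!
`H_p` and `Λ_p` form a Galois connection (residuation, pointwise), so `H_p (Λ_p g) ≤ g` always.
For the converse, the coder row `ε y` satisfies `g y * p (ε y, y') ≤ g y'` for every `y'`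
(it is `g y` at `y' = y` and `⊥` elsewhere), so `g y ≤ Λ_p g (ε y)` and hence
`g y = g y * p (ε y, y) ≤ H_p (Λ_p g) y`.
-/

namespace Quantale

variable {Q X Y : Type*}

section Semigroup

variable [Semigroup Q] [CompleteLattice Q] [IsQuantale Q]

def hTransform (p : X × Y → Q) (f : X → Q) : Y → Q :=
  fun y => ⨆ x, f x * p (x, y)

/-- The paper's residuum `a / b` (with `c · b ≤ a ↔ c ≤ a / b`) is `b ⇨ₗ a`. -/
def lambdaTransform (p : X × Y → Q) (g : Y → Q) : X → Q :=
  fun x => ⨅ y, p (x, y) ⇨ₗ g y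

theorem gc_hTransform_lambdaTransform (p : X × Y → Q) :
    GaloisConnection (hTransform p) (lambdaTransform p) := fun f g => by
  simp only [hTransform, lambdaTransform, Pi.le_def, iSup_le_iff, le_iInf_iff,
    leftMulResiduation_le_iff_mul_le]
  exact forall_comm

theorem hTransform_lambdaTransform_le (p : X × Y → Q) (g : Y → Q) :
    hTransform p (lambdaTransform p g) ≤ g :=
  (gc_hTransform_lambdaTransform p).l_u_le g

end Semigroup

section Monoid

variable [Monoid Q] [CompleteLattice Q] [IsQuantale Q]

theorem le_lambdaTransform_of_coder {p : X × Y → Q} {ε : Y → X}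
    (hnorm : ∀ y, p (ε y, y) = 1) (hstrong : ∀ y₁ y₂, y₁ ≠ y₂ → p (ε y₁, y₂) = ⊥)
    (g : Y → Q) (y : Y) : g y ≤ lambdaTransform p g (ε y) := by
  refine le_iInf fun y' => leftMulResiduation_le_iff_mul_le.mpr ?_
  rcases eq_or_ne y y' with rfl | hne
  · rw [hnorm, mul_one]
  · rw [hstrong y y' hne, mul_bot]
    exact bot_le

theorem hTransform_lambdaTransform_of_coder {p : X × Y → Q} {ε : Y → X}
    (hnorm : ∀ y, p (ε y, y) = 1) (hstrong : ∀ y₁ y₂, y₁ ≠ y₂ → p (ε y₁, y₂) = ⊥)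
    (g : Y → Q) : hTransform p (lambdaTransform p g) = g := by
  refine le_antisymm (hTransform_lambdaTransform_le p g) fun y => ?_
  calc g y = g y * p (ε y, y) := by rw [hnorm, mul_one]
    _ ≤ lambdaTransform p g (ε y) * p (ε y, y) := by
      gcongr
      exact le_lambdaTransform_of_coder hnorm hstrong g y
    _ ≤ hTransform p (lambdaTransform p g) y :=
      le_iSup (fun x => lambdaTransform p g x * p (x, y)) (ε y)

end Monoid

end Quantale

theorem strong_transform_section_general {Q X Y : Type*} [Monoid Q] [CompleteLattice Q]
    [IsQuantale Q] (p : X × Y → Q)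
    (ε : Y → X)
    (hnorm : ∀ y : Y, p (ε y, y) = 1)
    (hstrong : ∀ y₁ y₂ : Y, y₁ ≠ y₂ → p (ε y₁, y₂) = ⊥) :
    (∀ g : Y → Q,
      (fun y => ⨆ x, (fun x => ⨅ y', sSup {c : Q | c * p (x, y') ≤ g y'}) x * p (x, y)) = g) ∧
    Function.Surjective (fun (f : X → Q) => fun y => ⨆ x, f x * p (x, y)) ∧
    Function.Injective
      (fun (g : Y → Q) => fun x => ⨅ y, sSup {c : Q | c * p (x, y) ≤ g y}) := by
  have hsection : Function.LeftInverse (Quantale.hTransform p) (Quantale.lambdaTransform p) :=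
    Quantale.hTransform_lambdaTransform_of_coder hnorm hstrong
  exact ⟨hsection, hsection.surjective, hsection.injective⟩

/-- If `p` is a strong coder (there is an injective `ε : Y → X` with
`p (ε y, y) = e` and `p (ε y₁, y₂) = ⊥` for `y₁ ≠ y₂`), then `H_p ∘ Λ_p = id`,
so `H_p` is surjective and `Λ_p` is injective. -/
theorem strong_transform_section {Q X Y : Type*} [Monoid Q] [CompleteLattice Q]
    [IsQuantale Q] [Nonempty X] [Nonempty Y] (p : X × Y → Q)
    (ε : Y → X) (hε : Function.Injective ε)
    (hnorm : ∀ y : Y, p (ε y, y) = 1)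
    (hstrong : ∀ y₁ y₂ : Y, y₁ ≠ y₂ → p (ε y₁, y₂) = ⊥) :
    (∀ g : Y → Q,
      (fun y => ⨆ x, (fun x => ⨅ y', sSup {c : Q | c * p (x, y') ≤ g y'}) x * p (x, y)) = g) ∧
    Function.Surjective (fun (f : X → Q) => fun y => ⨆ x, f x * p (x, y)) ∧
    Function.Injective
      (fun (g : Y → Q) => fun x => ⨅ y, sSup {c : Q | c * p (x, y) ≤ g y}) :=
  strong_transform_section_general p ε hnorm hstrong
end

section
/- For a quantale Q and nonempty sets X, Y, the map p ↦ H_p is an isomorphism of complete lattices between Q^{X×Y} (pointwise order) and Hom_Q(Q^X, Q^Y) (pointwise order); if Q is commutative it is an isomorphism of Q-modules. In particular End_Q(Q^X) ≅ Q^{X×X}. -/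
/-- Homomorphisms between the free `Q`-modules `Q^X` and `Q^Y` (pointwise
structure): maps preserving arbitrary joins and the scalar action. -/
def IsFreeQModuleHom {Q X Y : Type*} [Monoid Q] [CompleteLattice Q] [IsQuantale Q]
    (h : (X → Q) → (Y → Q)) : Prop :=
  (∀ F : Set (X → Q), h (sSup F) = ⨆ f ∈ F, h f) ∧
  (∀ (q : Q) (f : X → Q), h (fun x => q * f x) = fun y => q * h f y)

/-!
Every `f ∈ Q^X` is the join `⨆ x, f x · δ_x` of scalar multiples of the Dirac functions
`δ_x = (1 at x, ⊥ elsewhere)`, so a homomorphism `h` is determined by the values `h δ_x`, and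
`h = H_p` for the kernel `p (x, y) = h δ_x y`. Conversely `H_p δ_x = p (x, ·)`, which recovers
`p` from `H_p` and makes `p ↦ H_p` an order embedding.
-/

open Quantale

namespace IsFreeQModuleHom

variable {Q X Y : Type*} [Monoid Q] [CompleteLattice Q] [IsQuantale Q]
  {h : (X → Q) → (Y → Q)}

theorem map_iSup (hh : IsFreeQModuleHom h) {ι : Type*} (f : ι → X → Q) :
    h (⨆ i, f i) = ⨆ i, h (f i) := by
  rw [iSup, hh.1, iSup_range]

theorem map_smul (hh : IsFreeQModuleHom h) (q : Q) (f : X → Q) :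
    h (fun x => q * f x) = fun y => q * h f y :=
  hh.2 q f

end IsFreeQModuleHom

namespace FreeQModule

variable {Q X Y : Type*} [Monoid Q] [CompleteLattice Q] [IsQuantale Q]

/-- The transform `H_p` with kernel `p`. -/
def transform (p : X × Y → Q) (f : X → Q) : Y → Q :=
  fun y => ⨆ x, f x * p (x, y)

open Classical in
noncomputable def dirac (x : X) : X → Q :=
  fun x' => if x' = x then 1 else ⊥

theorem iSup_dirac_mul (x : X) (g : X → Q) : ⨆ x', dirac x x' * g x' = g x := by
  have h (x' : X) : dirac x x' * g x' = ⨆ _ : x' = x, g x' := by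
    by_cases hx : x' = x <;> simp [dirac, hx]
  simp only [h, iSup_iSup_eq_left]

theorem iSup_mul_dirac (f : X → Q) (x' : X) : ⨆ x, f x * dirac x x' = f x' := by
  have h (x : X) : f x * dirac x x' = ⨆ _ : x' = x, f x := by
    by_cases hx : x' = x <;> simp [dirac, hx]
  simp only [h, iSup_iSup_eq_right]

theorem eq_iSup_mul_dirac (f : X → Q) : f = ⨆ x, fun x' => f x * dirac x x' := by
  funext x'
  rw [iSup_apply, iSup_mul_dirac]

theorem transform_dirac (p : X × Y → Q) (x : X) : transform p (dirac x) = fun y => p (x, y) :=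
  funext fun y => iSup_dirac_mul x fun x' => p (x', y)

theorem isFreeQModuleHom_transform (p : X × Y → Q) : IsFreeQModuleHom (transform p) := by
  refine ⟨fun F => ?_, fun q f => ?_⟩
  · funext y
    simp only [transform, sSup_apply, iSup_apply, iSup_subtype', iSup_mul_distrib]
    exact iSup_comm
  · funext y
    simp only [transform, mul_assoc, mul_iSup_distrib]

theorem transform_injective : Function.Injective (transform : (X × Y → Q) → _) := by
  intro p p' hp
  funext ⟨x, y⟩
  simpa only [transform_dirac] using congrFun (congrFun hp (dirac x)) y

theorem _root_.IsFreeQModuleHom.eq_transform {h : (X → Q) → (Y → Q)} (hh : IsFreeQModuleHom h) :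
    h = transform fun z => h (dirac z.1) z.2 := by
  funext f y
  conv_lhs => rw [eq_iSup_mul_dirac f]
  rw [hh.map_iSup, iSup_apply]
  simp only [hh.map_smul, transform]

theorem transform_le_transform_iff {p p' : X × Y → Q} :
    (∀ f, transform p f ≤ transform p' f) ↔ p ≤ p' := by
  refine ⟨fun H ⟨x, y⟩ => ?_, fun hp f y => iSup_mono fun x => mul_le_mul_right (hp (x, y)) _⟩
  simpa only [transform_dirac] using H (dirac x) y

theorem transform_mul_left_of_commute {q : Q} (hq : ∀ a, Commute a q) (p : X × Y → Q) :
    transform (fun z => q * p z) = fun f y => q * transform p f y := by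
  funext f y
  simp only [transform, ← mul_assoc, (hq _).eq, mul_iSup_distrib]

end FreeQModule

open FreeQModule in
theorem kernel_hom_isomorphism_general {Q X Y : Type*} [Monoid Q] [CompleteLattice Q]
    [IsQuantale Q] :
    -- every transform is a homomorphism
    (∀ p : X × Y → Q,
      IsFreeQModuleHom (fun (f : X → Q) => fun y => ⨆ x, f x * p (x, y))) ∧
    -- every homomorphism is the transform of a unique kernel
    (∀ h : (X → Q) → (Y → Q), IsFreeQModuleHom h →
      ∃! p : X × Y → Q, h = fun f => fun y => ⨆ x, f x * p (x, y)) ∧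
    -- `p ↦ H_p` is an order isomorphism onto its image
    (∀ p p' : X × Y → Q, p ≤ p' ↔
      ∀ f : X → Q, (fun y => ⨆ x, f x * p (x, y)) ≤ fun y => ⨆ x, f x * p' (x, y)) ∧
    -- when `Q` is commutative, `p ↦ H_p` preserves the scalar action
    ((∀ a b : Q, a * b = b * a) → ∀ (q : Q) (p : X × Y → Q),
      (fun (f : X → Q) => fun y => ⨆ x, f x * (q * p (x, y))) =
        fun (f : X → Q) => fun y => q * ⨆ x, f x * p (x, y)) :=
  ⟨isFreeQModuleHom_transform,
    fun h hh => ⟨fun z => h (dirac z.1) z.2, hh.eq_transform, fun _ hp => transform_injective (hp.symm.trans hh.eq_transform)⟩,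
    fun _ _ => transform_le_transform_iff.symm,
    fun comm q => transform_mul_left_of_commute fun a => comm a q⟩

/-- The map `p ↦ H_p` is an isomorphism of complete lattices between `Q^{X×Y}`
and `Hom_Q(Q^X, Q^Y)` (both ordered pointwise): it is an order embedding whose
range is exactly the set of `Q`-module homomorphisms; when `Q` is commutative it
also preserves the scalar action, hence is an isomorphism of `Q`-modules.
(The case `Y = X` gives `End_Q(Q^X) ≅ Q^{X×X}`.) -/
theorem kernel_hom_isomorphism {Q X Y : Type*} [Monoid Q] [CompleteLattice Q]
    [IsQuantale Q] [Nonempty X] [Nonempty Y] :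
    -- every transform is a homomorphism
    (∀ p : X × Y → Q,
      IsFreeQModuleHom (fun (f : X → Q) => fun y => ⨆ x, f x * p (x, y))) ∧
    -- every homomorphism is the transform of a unique kernel
    (∀ h : (X → Q) → (Y → Q), IsFreeQModuleHom h →
      ∃! p : X × Y → Q, h = fun f => fun y => ⨆ x, f x * p (x, y)) ∧
    -- `p ↦ H_p` is an order isomorphism onto its image
    (∀ p p' : X × Y → Q, p ≤ p' ↔
      ∀ f : X → Q, (fun y => ⨆ x, f x * p (x, y)) ≤ fun y => ⨆ x, f x * p' (x, y)) ∧
    -- when `Q` is commutative, `p ↦ H_p` preserves the scalar action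
    ((∀ a b : Q, a * b = b * a) → ∀ (q : Q) (p : X × Y → Q),
      (fun (f : X → Q) => fun y => ⨆ x, f x * (q * p (x, y))) =
        fun (f : X → Q) => fun y => q * ⨆ x, f x * p (x, y)) :=
  kernel_hom_isomorphism_general
end
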